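/- Sensitivity bound for quadratic-loss polynomial coefficients: if all data tuples (x_i, y_i) satisfy ‖(x_i, y_i)‖_∞ ≤ 1 (each coordinate in [0,1]), then changing one tuple changes the vector of monomial coefficients of the objective Σ_i (w·x_i − y_i)², namely the entries of (X^T X, X^T Y, Y^T Y), by at most 2(d+1)² in L¹ norm. -/
import Mathlib

lemma aux_diff_bound {m : ℕ} (f g : Fin m → ℝ) (i₀ : Fin m)
    (h : ∀ i, i ≠ i₀ → f i = g i)
    (hf : ∀ i, f i ∈ Set.Icc (0 : ℝ) 1) (hg : ∀ i, g i ∈ Set.Icc (0 : ℝ) 1) :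
    |(∑ i, f i) - ∑ i, g i| ≤ 1 := by
  have hsum : (∑ i, f i) - ∑ i, g i = f i₀ - g i₀ := by
    rw [← Finset.sum_sub_distrib]
    rw [Finset.sum_eq_single i₀]
    · intro b _ hb; rw [h b hb]; ring
    · intro hb; exact absurd (Finset.mem_univ i₀) hb
  rw [hsum]
  have h1 := hf i₀; have h2 := hg i₀
  simp only [Set.mem_Icc] at h1 h2
  rw [abs_le]; constructor <;> linarith

/-- Sensitivity bound for the quadratic-loss coefficients: if all tuples lie in
`[0,1]^{d+1}` and two databases differ in exactly one tuple, then the L¹ distance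
between their coefficient vectors `(XᵀX, XᵀY, YᵀY)` is at most `2 (d+1)²`. -/
theorem stmt17 (m d : ℕ)
    (x x' : Fin m → Fin d → ℝ) (y y' : Fin m → ℝ)
    (hx : ∀ i j, x i j ∈ Set.Icc (0 : ℝ) 1) (hy : ∀ i, y i ∈ Set.Icc (0 : ℝ) 1)
    (hx' : ∀ i j, x' i j ∈ Set.Icc (0 : ℝ) 1) (hy' : ∀ i, y' i ∈ Set.Icc (0 : ℝ) 1)
    (hadj : ∃ i₀ : Fin m, ∀ i, i ≠ i₀ → x i = x' i ∧ y i = y' i) :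
    (∑ j : Fin d, ∑ j' : Fin d, |(∑ i, x i j * x i j') - ∑ i, x' i j * x' i j'|)
      + (∑ j : Fin d, |(∑ i, x i j * y i) - ∑ i, x' i j * y' i|)
      + |(∑ i, y i ^ 2) - ∑ i, y' i ^ 2|
      ≤ 2 * ((d : ℝ) + 1) ^ 2 := by
  obtain ⟨i₀, hi₀⟩ := hadj
  have mul01 : ∀ a b : ℝ, a ∈ Set.Icc (0:ℝ) 1 → b ∈ Set.Icc (0:ℝ) 1 →
      a * b ∈ Set.Icc (0:ℝ) 1 := by
    intro a b ha hb
    simp only [Set.mem_Icc] at *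
    constructor
    · exact mul_nonneg ha.1 hb.1
    · calc a * b ≤ 1 * 1 := mul_le_mul ha.2 hb.2 hb.1 zero_le_one
        _ = 1 := by ring
  have h1 : (∑ j : Fin d, ∑ j' : Fin d,
      |(∑ i, x i j * x i j') - ∑ i, x' i j * x' i j'|) ≤ (d : ℝ) * d := by
    calc _ ≤ ∑ j : Fin d, ∑ j' : Fin d, (1:ℝ) := by
          apply Finset.sum_le_sum; intro j _
          apply Finset.sum_le_sum; intro j' _
          apply aux_diff_bound _ _ i₀
          · intro i hi; rw [(hi₀ i hi).1]
          · intro i; exact mul01 _ _ (hx i j) (hx i j')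
          · intro i; exact mul01 _ _ (hx' i j) (hx' i j')
      _ = (d : ℝ) * d := by simp
  have h2 : (∑ j : Fin d, |(∑ i, x i j * y i) - ∑ i, x' i j * y' i|) ≤ (d : ℝ) := by
    calc _ ≤ ∑ j : Fin d, (1:ℝ) := by
          apply Finset.sum_le_sum; intro j _
          apply aux_diff_bound _ _ i₀
          · intro i hi; rw [(hi₀ i hi).1, (hi₀ i hi).2]
          · intro i; exact mul01 _ _ (hx i j) (hy i)
          · intro i; exact mul01 _ _ (hx' i j) (hy' i)
      _ = (d : ℝ) := by simp
  have h3 : |(∑ i, y i ^ 2) - ∑ i, y' i ^ 2| ≤ 1 := by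
    apply aux_diff_bound _ _ i₀
    · intro i hi; rw [(hi₀ i hi).2]
    · intro i; rw [sq]; exact mul01 _ _ (hy i) (hy i)
    · intro i; rw [sq]; exact mul01 _ _ (hy' i) (hy' i)
  have hd : (0:ℝ) ≤ d := Nat.cast_nonneg d
  nlinarith
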